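/- arXiv:2605.30066 — 7 statements merged into one kernel-verified Lean document; each statement's English description precedes it below -/
import Mathlib

section
/- Let X and Y be compact metric spaces and π : X → Y a continuous surjective semiopen map. If Ω is a residual subset of Y, then π⁻¹(Ω) is residual in X. -/
open Filter Topology Set

/-- A map between topological spaces is *semiopen* if the image of every
nonempty open set has nonempty interior. -/
def SemiOpen {X Y : Type*} [TopologicalSpace X] [TopologicalSpace Y] (f : X → Y) : Prop :=
  ∀ U : Set X, IsOpen U → U.Nonempty → (interior (f '' U)).Nonempty

/-- The `n`-th iterate (`n : ℤ`) of a homeomorphism. -/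
def zIter {X : Type*} [TopologicalSpace X] (T : X ≃ₜ X) (n : ℤ) : X → X :=
  fun x => (T.toEquiv ^ n) x

/-- The two-sided orbit of a point under a homeomorphism. -/
def zOrbit {X : Type*} [TopologicalSpace X] (T : X ≃ₜ X) (x : X) : Set X :=
  Set.range fun n : ℤ => zIter T n x

/-- A system is minimal if every orbit is dense. -/
def IsMinimalSystem {X : Type*} [TopologicalSpace X] (T : X ≃ₜ X) : Prop :=
  ∀ x : X, Dense (zOrbit T x)

/-- A minimal subset: nonempty, closed, invariant, with no proper nonempty
closed invariant subset. -/
def IsMinimalSubset {X : Type*} [TopologicalSpace X] (T : X ≃ₜ X) (M : Set X) : Prop :=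
  M.Nonempty ∧ IsClosed M ∧ T '' M = M ∧
    ∀ M' ⊆ M, M'.Nonempty → IsClosed M' → T '' M' = M' → M' = M

/-- A factor map between systems. -/
def IsFactorMap {X Y : Type*} [TopologicalSpace X] [TopologicalSpace Y]
    (T : X ≃ₜ X) (S : Y ≃ₜ Y) (f : X → Y) : Prop :=
  Continuous f ∧ Function.Surjective f ∧ ∀ x, f (T x) = S (f x)

/-- The regionally proximal relation. -/
def RP {X : Type*} [MetricSpace X] (T : X ≃ₜ X) : Set (X × X) :=
  {p | ∃ (u v : ℕ → X) (n : ℕ → ℤ),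
    Tendsto u atTop (𝓝 p.1) ∧ Tendsto v atTop (𝓝 p.2) ∧
    Tendsto (fun i => dist (zIter T (n i) (u i)) (zIter T (n i) (v i))) atTop (𝓝 0)}

/-- A joining of two systems: a closed invariant subset of the product with
full projections onto both coordinates. -/
def IsJoining {X Y : Type*} [TopologicalSpace X] [TopologicalSpace Y]
    (T : X ≃ₜ X) (S : Y ≃ₜ Y) (J : Set (X × Y)) : Prop :=
  IsClosed J ∧ (T.prodCongr S) '' J = J ∧
    Prod.fst '' J = Set.univ ∧ Prod.snd '' J = Set.univ

/-- `J` projects onto `X_eq × Y_eq`: phrased via the regionally proximal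
relation, every product of RP-cells meets `J`. -/
def FullEqProjection {X Y : Type*} [MetricSpace X] [MetricSpace Y]
    (T : X ≃ₜ X) (S : Y ≃ₜ Y) (J : Set (X × Y)) : Prop :=
  ∀ x : X, ∀ y : Y, ∃ p ∈ J, (x, p.1) ∈ RP T ∧ (y, p.2) ∈ RP S

/-- Two minimal systems are quasi-disjoint if the full product is the only
joining projecting onto the product of the maximal equicontinuous factors. -/
def QuasiDisjoint {X Y : Type*} [MetricSpace X] [MetricSpace Y]
    (T : X ≃ₜ X) (S : Y ≃ₜ Y) : Prop :=
  ∀ J : Set (X × Y), IsJoining T S J → FullEqProjection T S J → J = Set.univ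

/-- Two systems are disjoint if the full product is the only joining. -/
def DisjointSystems {X Y : Type*} [TopologicalSpace X] [TopologicalSpace Y]
    (T : X ≃ₜ X) (S : Y ≃ₜ Y) : Prop :=
  ∀ J : Set (X × Y), IsJoining T S J → J = Set.univ

/-- A system is equicontinuous (with respect to all integer iterates). -/
def EquicontinuousSystem {X : Type*} [MetricSpace X] (T : X ≃ₜ X) : Prop :=
  ∀ ε > (0 : ℝ), ∃ δ > (0 : ℝ), ∀ x₁ x₂ : X, dist x₁ x₂ < δ →
    ∀ n : ℤ, dist (zIter T n x₁) (zIter T n x₂) < ε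

/-- A pair of points is proximal. -/
def ProximalPair {X : Type*} [MetricSpace X] (T : X ≃ₜ X) (x₁ x₂ : X) : Prop :=
  ∀ ε > (0 : ℝ), ∃ n : ℤ, dist (zIter T n x₁) (zIter T n x₂) < ε

/-- preimages of residual sets under continuous surjective
semiopen maps between compact metric spaces are residual. -/
theorem stmt0 {X Y : Type*} [MetricSpace X] [CompactSpace X]
    [MetricSpace Y] [CompactSpace Y] (π : X → Y)
    (hcont : Continuous π) (hsurj : Function.Surjective π) (hsemi : SemiOpen π)
    (Ω : Set Y) (hΩ : Ω ∈ residual Y) :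
    π ⁻¹' Ω ∈ residual X := by
  rw [mem_residual_iff] at hΩ ⊢
  obtain ⟨S, hSo, hSd, hSc, hSs⟩ := hΩ
  refine ⟨(π ⁻¹' ·) '' S, ?_, ?_, hSc.image _, ?_⟩
  · rintro t ⟨u, hu, rfl⟩
    exact (hSo u hu).preimage hcont
  · rintro t ⟨u, hu, rfl⟩
    rw [dense_iff_inter_open]
    intro U hU hUne
    obtain ⟨y, hyI⟩ := hsemi U hU hUne
    obtain ⟨z, hz, hzI⟩ := (hSd u hu).exists_mem_open isOpen_interior ⟨y, hyI⟩
    obtain ⟨x, hxU, rfl⟩ := interior_subset hzI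
    exact ⟨x, hxU, hz⟩
  · intro x hx
    refine hSs fun u hu => ?_
    exact hx (π ⁻¹' u) ⟨u, hu, rfl⟩
end

section
/- Let X and Y be compact metric spaces and π : X → Y a continuous surjective semiopen map. Then the set of open points of π is residual in X. -/
open Filter Topology Set

/-!
For an open set `V`, the points `x ∈ V` with `π x ∈ interior (π '' V)` form an open set, and
semiopenness makes it dense in `V`: a nonempty open `W ⊆ V` has `interior (π '' W)` nonempty, and
any preimage in `W` of a point of that interior qualifies. Taking the union over all balls of
radius `1 / (n + 1)` gives, for each `n`, a dense open set; a point in all of them is an open point,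
since for large `n` every ball of radius `1 / (n + 1)` containing it lies in a given neighbourhood.
-/

section

variable {X Y : Type*} [TopologicalSpace Y]

def openPoints [TopologicalSpace X] (π : X → Y) : Set X :=
  {x | ∀ U ∈ 𝓝 x, π x ∈ interior (π '' U)}

theorem SemiOpen.dense_iUnion_inter_preimage_interior_image [TopologicalSpace X] {π : X → Y}
    (hπ : SemiOpen π) {ι : Type*} {V : ι → Set X} (hV : ∀ i, IsOpen (V i))
    (hcover : ⋃ i, V i = univ) :
    Dense (⋃ i, V i ∩ π ⁻¹' interior (π '' V i)) := by
  refine dense_iff_inter_open.2 fun W hW ⟨z, hzW⟩ => ?_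
  obtain ⟨i, hzV⟩ := mem_iUnion.1 (hcover.ge (mem_univ z))
  obtain ⟨y, hy⟩ := hπ (W ∩ V i) (hW.inter (hV i)) ⟨z, hzW, hzV⟩
  obtain ⟨x, ⟨hxW, hxV⟩, rfl⟩ := interior_subset hy
  exact ⟨x, hxW, mem_iUnion.2 ⟨i, hxV,
    interior_mono (image_mono inter_subset_right) hy⟩⟩

theorem isOpen_iUnion_inter_preimage_interior_image [TopologicalSpace X] {π : X → Y}
    (hπ : Continuous π) {ι : Type*} {V : ι → Set X} (hV : ∀ i, IsOpen (V i)) :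
    IsOpen (⋃ i, V i ∩ π ⁻¹' interior (π '' V i)) :=
  isOpen_iUnion fun i => (hV i).inter (isOpen_interior.preimage hπ)

theorem iInter_iUnion_ball_subset_openPoints [PseudoMetricSpace X] (π : X → Y) :
    ⋂ n : ℕ, ⋃ c : X,
        Metric.ball c (1 / (n + 1)) ∩ π ⁻¹' interior (π '' Metric.ball c (1 / (n + 1))) ⊆
      openPoints π := by
  intro x hx U hU
  obtain ⟨ε, hε, hballU⟩ := Metric.mem_nhds_iff.1 hU
  obtain ⟨n, hn⟩ := exists_nat_one_div_lt (half_pos hε)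
  obtain ⟨c, hxc, hπx⟩ := mem_iUnion.1 (mem_iInter.1 hx n)
  have hsub : Metric.ball c (1 / (n + 1)) ⊆ U := fun w hw =>
    hballU <| calc dist w x ≤ dist w c + dist x c := dist_triangle_right w x c
      _ < 1 / (n + 1) + 1 / (n + 1) := add_lt_add hw hxc
      _ < ε := by linarith
  exact interior_mono (image_mono hsub) hπx

end

theorem stmt1_general {X Y : Type*} [MetricSpace X]
    [MetricSpace Y] (π : X → Y)
    (hcont : Continuous π) (hsemi : SemiOpen π) :
    {x : X | ∀ U ∈ 𝓝 x, π x ∈ interior (π '' U)} ∈ residual X := by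
  refine mem_of_superset (countable_iInter_mem.2 fun n : ℕ => ?_)
    (iInter_iUnion_ball_subset_openPoints π)
  have hballs : ∀ c : X, IsOpen (Metric.ball c (1 / (n + 1))) := fun _ => Metric.isOpen_ball
  exact residual_of_dense_open (isOpen_iUnion_inter_preimage_interior_image hcont hballs)
    (hsemi.dense_iUnion_inter_preimage_interior_image hballs
      (iUnion_eq_univ_iff.2 fun c => ⟨c, Metric.mem_ball_self (by positivity)⟩))

/-- the set of open points of a continuous surjective semiopen
map between compact metric spaces is residual. -/
theorem stmt1 {X Y : Type*} [MetricSpace X] [CompactSpace X]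
    [MetricSpace Y] [CompactSpace Y] (π : X → Y)
    (hcont : Continuous π) (hsurj : Function.Surjective π) (hsemi : SemiOpen π) :
    {x : X | ∀ U ∈ 𝓝 x, π x ∈ interior (π '' U)} ∈ residual X :=
  stmt1_general π hcont hsemi
end

section
/- Let X, Y, Z be compact metric spaces and φ : X → Y, ψ : Y → Z continuous surjections. If both φ and ψ are semiopen, then there is a residual subset Ω of Z such that for each z ∈ Ω, the restriction φ : φ⁻¹(ψ⁻¹(z)) → ψ⁻¹(z) is semiopen (with respect to the subspace topologies). -/
open Filter Topology Set

/-- for semiopen continuous surjections φ : X → Y and ψ : Y → Z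
between compact metric spaces, for residually many z ∈ Z the restriction of φ
to the fiber over z is semiopen. -/
theorem stmt2 {X Y Z : Type*} [MetricSpace X] [CompactSpace X]
    [MetricSpace Y] [CompactSpace Y] [MetricSpace Z] [CompactSpace Z]
    (φ : X → Y) (ψ : Y → Z)
    (hφc : Continuous φ) (hφs : Function.Surjective φ) (hφ : SemiOpen φ)
    (hψc : Continuous ψ) (hψs : Function.Surjective ψ) (hψ : SemiOpen ψ) :
    ∃ Ω ∈ residual Z, ∀ z ∈ Ω,
      SemiOpen (fun x : (φ ⁻¹' (ψ ⁻¹' {z})) => (⟨φ x.1, x.2⟩ : ψ ⁻¹' {z})) := by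
  classical
  -- the "good" set associated to an open set U ⊆ X
  set good : Set X → Set Z := fun U =>
    {z | (∃ x ∈ U, ψ (φ x) = z) →
      ∃ V : Set Y, IsOpen V ∧ (∃ y ∈ V, ψ y = z) ∧ ∀ y ∈ V, ψ y = z → ∃ x ∈ U, φ x = y}
    with hgood
  have key : ∀ U : Set X, IsOpen U → Dense (interior (good U)) := by
    intro U hU
    rw [dense_iff_inter_open]
    intro O hO hOne
    by_cases h : (U ∩ (fun x => ψ (φ x)) ⁻¹' O).Nonempty
    · have hU' : IsOpen (U ∩ (fun x => ψ (φ x)) ⁻¹' O) :=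
        hU.inter ((hψc.comp hφc).isOpen_preimage O hO)
      have hV0 : (interior (φ '' (U ∩ (fun x => ψ (φ x)) ⁻¹' O))).Nonempty := hφ _ hU' h
      set V0 : Set Y := interior (φ '' (U ∩ (fun x => ψ (φ x)) ⁻¹' O)) with hV0def
      have hO1 : (interior (ψ '' V0)).Nonempty := hψ V0 isOpen_interior hV0
      -- every point of O1 := interior (ψ '' V0) lies in O and in good U
      have hsubO : interior (ψ '' V0) ⊆ O := by
        intro z hz
        rcases interior_subset hz with ⟨y, hyV0, rfl⟩
        rcases interior_subset hyV0 with ⟨x, hx, rfl⟩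
        exact hx.2
      have hsubG : interior (ψ '' V0) ⊆ good U := by
        intro z hz _
        refine ⟨V0, isOpen_interior, ?_, ?_⟩
        · rcases interior_subset hz with ⟨y, hyV0, rfl⟩
          exact ⟨y, hyV0, rfl⟩
        · intro y hyV0 _
          rcases interior_subset hyV0 with ⟨x, hx, rfl⟩
          exact ⟨x, hx.1, rfl⟩
      rcases hO1 with ⟨z, hz⟩
      exact ⟨z, hsubO hz, interior_mono hsubG (by rwa [interior_interior])⟩
    · rcases hOne with ⟨z, hz⟩
      have hOsub : O ⊆ good U := by
        intro z' hz' hx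
        rcases hx with ⟨x, hxU, hxz⟩
        exact absurd ⟨x, hxU, by simpa [hxz] using hz'⟩ h
      exact ⟨z, hz, interior_maximal hOsub hO hz⟩
  obtain ⟨b, hbc, -, hb⟩ := TopologicalSpace.exists_countable_basis X
  refine ⟨⋂ U ∈ b, interior (good U), ?_, ?_⟩
  · exact (countable_bInter_mem hbc).2 fun U hUb =>
      residual_of_dense_open isOpen_interior (key U (hb.isOpen hUb))
  · intro z hz
    intro U' hU' hU'ne
    obtain ⟨W, hW, hWU'⟩ := isOpen_induced_iff.mp hU'
    rcases hU'ne with ⟨x₀, hx₀⟩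
    have hx₀W : (x₀ : X) ∈ W := by rw [← hWU'] at hx₀; exact hx₀
    obtain ⟨Un, hUnb, hxUn, hUnW⟩ := hb.exists_subset_of_mem_open hx₀W hW
    have hzg : z ∈ good Un := interior_subset (mem_iInter₂.1 hz Un hUnb)
    have hP := hzg ⟨x₀.1, hxUn, x₀.2⟩
    rcases hP with ⟨V, hVopen, ⟨y₀, hy₀V, hy₀z⟩, hall⟩
    have hy₀mem : y₀ ∈ ψ ⁻¹' ({z} : Set Z) := hy₀z
    refine ⟨⟨y₀, hy₀mem⟩, ?_⟩
    have hopen : IsOpen ((Subtype.val : (ψ ⁻¹' ({z} : Set Z)) → Y) ⁻¹' V) :=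
      hVopen.preimage continuous_subtype_val
    refine mem_interior.2 ⟨_, ?_, hopen, hy₀V⟩
    rintro ⟨y, hy⟩ hyV
    have hyz : ψ y = z := hy
    rcases hall y hyV hyz with ⟨x, hxUn', hxy⟩
    have hxmem : x ∈ φ ⁻¹' (ψ ⁻¹' ({z} : Set Z)) := by
      simp only [Set.mem_preimage, hxy, Set.mem_singleton_iff]; exact hyz
    refine ⟨⟨x, hxmem⟩, ?_, ?_⟩
    · rw [← hWU']; exact hUnW hxUn'
    · exact Subtype.ext hxy
end

section
/- Let (X,T) be a topological dynamical system (X a compact metric space, T a homeomorphism of X) and let π : X → Z be a continuous surjection onto a compact metric space Z of fixed points, meaning π∘T = π. Then the set Ω = {z ∈ Z : π⁻¹(z) contains a unique minimal subset} is a Gδ subset of Z. -/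
open Filter Topology Set

/-!
A fiber `F = π⁻¹{z}` contains a unique minimal set iff any two orbit closures in `F` meet
(each contains a minimal set, and two distinct minimal sets are disjoint compacta), i.e. iff for
every `ε > 0` any two orbits in `F` come `ε`-close. For fixed `ε` this condition is open in `z`:
its failure is witnessed in the compact space `X × X` by a closed set of pairs, whose image in
`Z` is closed. Intersecting over `ε = 1/(n+1)` gives a Gδ set.
-/

section Iterates

variable {X : Type*} [TopologicalSpace X] (T : X ≃ₜ X)

lemma zIter_eq_zpow (n : ℤ) : zIter T n = ⇑(T ^ n) := by
  let toPerm : (X ≃ₜ X) →* Equiv.Perm X :=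
    { toFun := Homeomorph.toEquiv, map_one' := rfl, map_mul' := fun _ _ => rfl }
  ext x
  exact congrArg (· x) (map_zpow toPerm T n).symm

lemma continuous_zIter (n : ℤ) : Continuous (zIter T n) := by
  rw [zIter_eq_zpow]
  exact (T ^ n).continuous

variable {T}

lemma image_zpow_eq_of_image_eq {M : Set X} (hM : T '' M = M) (n : ℤ) : ⇑(T ^ n) '' M = M := by
  have image_mul (f g : X ≃ₜ X) : ⇑(f * g) '' M = f '' (g '' M) := (image_image f g M).symm
  have hinv : ⇑T⁻¹ '' M = M := by
    conv_lhs => rw [← hM]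
    rw [← image_mul, inv_mul_cancel]
    exact image_id M
  induction n using Int.induction_on with
  | zero => exact image_id M
  | succ n ih => rw [zpow_add_one, image_mul, hM, ih]
  | pred n ih => rw [zpow_sub_one, image_mul, hinv, ih]

lemma zIter_mem_of_image_eq {M : Set X} (hM : T '' M = M) (n : ℤ) {x : X} (hx : x ∈ M) :
    zIter T n x ∈ M := by
  rw [zIter_eq_zpow, ← image_zpow_eq_of_image_eq hM n]
  exact mem_image_of_mem _ hx

lemma mem_zOrbit_self (x : X) : x ∈ zOrbit T x := ⟨0, by simp [zIter_eq_zpow]⟩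

lemma image_zOrbit (x : X) : T '' zOrbit T x = zOrbit T x := by
  simp only [zOrbit, zIter_eq_zpow, ← range_comp]
  rw [← (Equiv.addLeft (1 : ℤ)).surjective.range_comp fun n => (T ^ n) x]
  congr 1
  ext n
  simp [zpow_add]

end Iterates

section MinimalSubsets

variable {X : Type*} [TopologicalSpace X] {T : X ≃ₜ X}

lemma closure_zOrbit_subset {F : Set X} (hF : IsClosed F) (hinv : T '' F = F) {x : X}
    (hx : x ∈ F) : closure (zOrbit T x) ⊆ F :=
  closure_minimal (range_subset_iff.2 fun n => zIter_mem_of_image_eq hinv n hx) hF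

lemma IsMinimalSubset.eq_of_inter_nonempty {M M' : Set X} (hM : IsMinimalSubset T M)
    (hM' : IsMinimalSubset T M') (h : (M ∩ M').Nonempty) : M = M' := by
  have hcl : IsClosed (M ∩ M') := hM.2.1.inter hM'.2.1
  have hinv : T '' (M ∩ M') = M ∩ M' := by
    rw [image_inter T.injective, hM.2.2.1, hM'.2.2.1]
  rw [← hM.2.2.2 _ inter_subset_left h hcl hinv, hM'.2.2.2 _ inter_subset_right h hcl hinv]

lemma exists_isMinimalSubset_subset [CompactSpace X] {F : Set X} (hne : F.Nonempty)
    (hcl : IsClosed F) (hinv : T '' F = F) : ∃ M ⊆ F, IsMinimalSubset T M := by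
  let S : Set (Set X) := {M | M ⊆ F ∧ M.Nonempty ∧ IsClosed M ∧ T '' M = M}
  have chain_lb : ∀ c ⊆ S, IsChain (· ⊆ ·) c → c.Nonempty → ∃ lb ∈ S, ∀ s ∈ c, lb ⊆ s := by
    intro c hcS hchain hcne
    have : Nonempty c := hcne.to_subtype
    have hdir : DirectedOn (· ⊇ ·) c := fun U hU V hV =>
      (hchain.total hU hV).elim (fun h => ⟨U, hU, subset_rfl, h⟩) fun h => ⟨V, hV, h, subset_rfl⟩
    obtain ⟨s₀, hs₀⟩ := hcne
    refine ⟨⋂₀ c, ⟨(sInter_subset_of_mem hs₀).trans (hcS hs₀).1, ?_, ?_, ?_⟩,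
      fun s hs => sInter_subset_of_mem hs⟩
    · exact IsCompact.nonempty_sInter_of_directed_nonempty_isCompact_isClosed
        hdir (fun U hU => (hcS hU).2.1)
        (fun U hU => (hcS hU).2.2.1.isCompact) (fun U hU => (hcS hU).2.2.1)
    · exact isClosed_sInter fun s hs => (hcS hs).2.2.1
    · rw [sInter_eq_iInter, image_iInter T.bijective]
      exact iInter_congr fun s : c => (hcS s.2).2.2.2
  obtain ⟨M, hFM, hmin⟩ := zorn_superset_nonempty S chain_lb F ⟨Subset.rfl, hne, hcl, hinv⟩
  obtain ⟨hMF, hMne, hMcl, hMinv⟩ := hmin.prop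
  exact ⟨M, hMF, hMne, hMcl, hMinv, fun M' hM'M hM'ne hM'cl hM'inv =>
    hM'M.antisymm (hmin.2 ⟨hM'M.trans hMF, hM'ne, hM'cl, hM'inv⟩ hM'M)⟩

lemma exists_isMinimalSubset_subset_closure_zOrbit [CompactSpace X] (x : X) :
    ∃ M ⊆ closure (zOrbit T x), IsMinimalSubset T M :=
  exists_isMinimalSubset_subset ⟨x, subset_closure (mem_zOrbit_self x)⟩ isClosed_closure
    (by rw [T.image_closure, image_zOrbit])

end MinimalSubsets

lemma IsCompact.inter_nonempty_of_forall_exists_dist_lt {X : Type*} [PseudoMetricSpace X]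
    {s t : Set X} (hs : IsCompact s) (ht : IsClosed t)
    (h : ∀ ε > 0, ∃ a ∈ s, ∃ b ∈ t, dist a b < ε) : (s ∩ t).Nonempty := by
  by_contra hst
  obtain ⟨r, hr, hsep⟩ := Metric.exists_pos_forall_lt_edist hs ht
    (disjoint_iff_inter_eq_empty.2 (not_nonempty_iff_eq_empty.1 hst))
  obtain ⟨a, ha, b, hb, hab⟩ := h r hr
  exact (hsep a ha b hb).not_gt (edist_lt_coe.2 hab)

section Fibers

variable {X : Type*} [MetricSpace X] [CompactSpace X] {T : X ≃ₜ X} {F : Set X}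

lemma forall_exists_dist_zIter_lt_of_existsUnique (hF : IsClosed F) (hinv : T '' F = F)
    (huniq : ∃! M, M ⊆ F ∧ IsMinimalSubset T M) {ε : ℝ} (hε : 0 < ε) {x y : X} (hx : x ∈ F)
    (hy : y ∈ F) : ∃ m k : ℤ, dist (zIter T m x) (zIter T k y) < ε := by
  obtain ⟨M, ⟨-, hM⟩, hM_unique⟩ := huniq
  have subset_closure_zOrbit {w : X} (hw : w ∈ F) : M ⊆ closure (zOrbit T w) := by
    obtain ⟨Mw, hMw, hMw_min⟩ := exists_isMinimalSubset_subset_closure_zOrbit (T := T) w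
    rw [← hM_unique Mw ⟨hMw.trans (closure_zOrbit_subset hF hinv hw), hMw_min⟩]
    exact hMw
  obtain ⟨p, hp⟩ := hM.1
  obtain ⟨_, ⟨m, rfl⟩, hm⟩ :=
    Metric.mem_closure_iff.1 (subset_closure_zOrbit hx hp) _ (half_pos hε)
  obtain ⟨_, ⟨k, rfl⟩, hk⟩ :=
    Metric.mem_closure_iff.1 (subset_closure_zOrbit hy hp) _ (half_pos hε)
  refine ⟨m, k, ?_⟩
  calc dist (zIter T m x) (zIter T k y) ≤ dist p (zIter T m x) + dist p (zIter T k y) :=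
        dist_triangle_left _ _ _
    _ < ε / 2 + ε / 2 := add_lt_add hm hk
    _ = ε := add_halves ε

lemma existsUnique_isMinimalSubset_of_forall_exists_dist_zIter_lt (hne : F.Nonempty)
    (hF : IsClosed F) (hinv : T '' F = F)
    (hclose : ∀ ε > 0, ∀ x ∈ F, ∀ y ∈ F, ∃ m k : ℤ, dist (zIter T m x) (zIter T k y) < ε) :
    ∃! M, M ⊆ F ∧ IsMinimalSubset T M := by
  obtain ⟨M, hMF, hM⟩ := exists_isMinimalSubset_subset hne hF hinv
  refine ⟨M, ⟨hMF, hM⟩, fun M' ⟨hM'F, hM'⟩ => hM'.eq_of_inter_nonempty hM ?_⟩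
  obtain ⟨x, hx⟩ := hM'.1
  obtain ⟨y, hy⟩ := hM.1
  refine hM'.2.1.isCompact.inter_nonempty_of_forall_exists_dist_lt hM.2.1 fun ε hε => ?_
  obtain ⟨m, k, hmk⟩ := hclose ε hε x (hM'F hx) y (hMF hy)
  exact ⟨_, zIter_mem_of_image_eq hM'.2.2.1 m hx, _, zIter_mem_of_image_eq hM.2.2.1 k hy, hmk⟩

lemma existsUnique_isMinimalSubset_iff (hne : F.Nonempty) (hF : IsClosed F)
    (hinv : T '' F = F) : (∃! M, M ⊆ F ∧ IsMinimalSubset T M) ↔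
      ∀ ε > 0, ∀ x ∈ F, ∀ y ∈ F, ∃ m k : ℤ, dist (zIter T m x) (zIter T k y) < ε :=
  ⟨fun h _ hε _ hx _ hy => forall_exists_dist_zIter_lt_of_existsUnique hF hinv h hε hx hy,
    existsUnique_isMinimalSubset_of_forall_exists_dist_zIter_lt hne hF hinv⟩

end Fibers

lemma isOpen_setOf_forall_fiber_mem {X Z : Type*} [TopologicalSpace X] [CompactSpace X]
    [TopologicalSpace Z] [T2Space Z] {f : X → Z} (hf : Continuous f) {U : Set X}
    (hU : IsOpen U) : IsOpen {z | ∀ x ∈ f ⁻¹' {z}, x ∈ U} := by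
  have hcompl : {z | ∀ x ∈ f ⁻¹' {z}, x ∈ U} = (f '' Uᶜ)ᶜ := by
    ext z
    simp only [mem_preimage, mem_singleton_iff, mem_compl_iff, mem_image]
    grind
  rw [hcompl]
  exact (hf.isClosedMap _ hU.isClosed_compl).isOpen_compl

lemma isOpen_setOf_forall_fiber_exists_dist_zIter_lt {X Z : Type*} [MetricSpace X]
    [CompactSpace X] [TopologicalSpace Z] [T2Space Z] (T : X ≃ₜ X) {π : X → Z}
    (hπ : Continuous π) (ε : ℝ) :
    IsOpen {z | ∀ x ∈ π ⁻¹' {z}, ∀ y ∈ π ⁻¹' {z}, ∃ m k : ℤ,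
      dist (zIter T m x) (zIter T k y) < ε} := by
  have hclose : IsOpen {p : X × X | ∃ m k : ℤ, dist (zIter T m p.1) (zIter T k p.2) < ε} := by
    simp only [ofPred_exists]
    exact isOpen_iUnion fun m => isOpen_iUnion fun k => isOpen_lt
      (((continuous_zIter T m).comp continuous_fst).dist
        ((continuous_zIter T k).comp continuous_snd)) continuous_const
  have hdiag := (isOpen_setOf_forall_fiber_mem (hπ.prodMap hπ) hclose).preimage
    (continuous_id.prodMk continuous_id)
  convert hdiag using 1
  ext z
  simp only [mem_preimage, mem_singleton_iff, Prod.map, Prod.ext_iff, id, Prod.forall]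
  exact ⟨fun h x y hxy => h x hxy.1 y hxy.2, fun h x hx y hy => h x y ⟨hx, hy⟩⟩

theorem stmt3_general {X Z : Type*} [MetricSpace X] [CompactSpace X]
    [MetricSpace Z] (T : X ≃ₜ X) (π : X → Z)
    (hcont : Continuous π) (hsurj : Function.Surjective π)
    (hfix : ∀ x, π (T x) = π x) :
    IsGδ {z : Z | ∃! M : Set X, M ⊆ π ⁻¹' {z} ∧ IsMinimalSubset T M} := by
  have hfiber (z : Z) : T '' (π ⁻¹' {z}) = π ⁻¹' {z} := by
    ext x
    rw [T.image_eq_preimage_symm]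
    simp [← hfix (T.symm x)]
  have hΩ : {z : Z | ∃! M : Set X, M ⊆ π ⁻¹' {z} ∧ IsMinimalSubset T M} =
      ⋂ n : ℕ, {z | ∀ x ∈ π ⁻¹' {z}, ∀ y ∈ π ⁻¹' {z}, ∃ m k : ℤ,
        dist (zIter T m x) (zIter T k y) < 1 / (n + 1)} := by
    ext z
    rw [mem_iInter]
    refine (existsUnique_isMinimalSubset_iff (hsurj z) (isClosed_singleton.preimage hcont)
      (hfiber z)).trans ⟨fun h n => h _ Nat.one_div_pos_of_nat, fun h ε hε x hx y hy => ?_⟩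
    obtain ⟨n, hn⟩ := exists_nat_one_div_lt hε
    obtain ⟨m, k, hmk⟩ := h n x hx y hy
    exact ⟨m, k, hmk.trans hn⟩
  rw [hΩ]
  exact .iInter_of_isOpen fun n => isOpen_setOf_forall_fiber_exists_dist_zIter_lt T hcont _

/-- if π : X → Z is a continuous surjection with π ∘ T = π, then
the set of z whose fiber contains a unique minimal subset is Gδ. -/
theorem stmt3 {X Z : Type*} [MetricSpace X] [CompactSpace X]
    [MetricSpace Z] [CompactSpace Z] (T : X ≃ₜ X) (π : X → Z)
    (hcont : Continuous π) (hsurj : Function.Surjective π)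
    (hfix : ∀ x, π (T x) = π x) :
    IsGδ {z : Z | ∃! M : Set X, M ⊆ π ⁻¹' {z} ∧ IsMinimalSubset T M} :=
  stmt3_general T π hcont hsurj hfix
end

section
/- Let (X,T) and (Y,S) be minimal systems, λ an S-invariant Borel probability measure on Y, and N a closed T×S-invariant subset of X×Y. For x ∈ X write N[x] = {y ∈ Y : (x,y) ∈ N}. Then λ(N[x]) = λ(N[x']) for all x, x' ∈ X. -/
open Filter Topology Set

/-!
The function `x ↦ λ(N[x])` is `T`-invariant, because `N[T x] = S(N[x])` and `λ` is
`S`-invariant. It is also upper semicontinuous: by outer regularity `N[x]` sits in an open `U`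
of almost the same measure, and since `Y` is compact the tube lemma gives `N[z] ⊆ U` for all `z`
near `x`. An upper semicontinuous invariant function on a minimal system is constant: if
`f x < f x'`, the neighbourhood `{f < f x'}` of `x` meets the dense orbit of `x'`, on which `f`
takes the value `f x'`.
-/

open MeasureTheory

theorem apply_zIter_eq_of_forall_apply_eq {X α : Type*} [TopologicalSpace X] {T : X ≃ₜ X}
    {f : X → α} (hf : ∀ x, f (T x) = f x) (n : ℤ) (x : X) : f (zIter T n x) = f x := by
  induction n using Int.induction_on generalizing x with
  | zero => rfl
  | succ n ih =>
    rw [zIter, zpow_add_one, Equiv.Perm.mul_apply, ← zIter, ih]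
    exact hf x
  | pred n ih =>
    rw [zIter, zpow_sub_one, Equiv.Perm.mul_apply, ← zIter, ih, ← hf]
    exact congrArg f (T.apply_symm_apply x)

theorem IsMinimalSystem.apply_eq_of_upperSemicontinuous {X β : Type*} [TopologicalSpace X]
    [LinearOrder β] {T : X ≃ₜ X} (hT : IsMinimalSystem T) {f : X → β}
    (hf : UpperSemicontinuous f) (hfT : ∀ x, f (T x) = f x) (x x' : X) : f x = f x' := by
  suffices key : ∀ x x', f x' ≤ f x from le_antisymm (key x' x) (key x x')
  intro x x'
  by_contra! hlt
  obtain ⟨_, ⟨n, rfl⟩, hn⟩ :=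
    ((mem_closure_iff_frequently.mp (hT x' x)).and_eventually (hf x _ hlt)).exists
  exact hn.ne (apply_zIter_eq_of_forall_apply_eq hfT n x')

section Sections

variable {X Y : Type*} [TopologicalSpace X] [TopologicalSpace Y] {N : Set (X × Y)}

theorem isOpen_setOf_preimage_prodMk_subset [CompactSpace Y] (hN : IsClosed N) {U : Set Y}
    (hU : IsOpen U) : IsOpen {x | Prod.mk x ⁻¹' N ⊆ U} := by
  have hcompl : {x | Prod.mk x ⁻¹' N ⊆ U} = (Prod.fst '' (N ∩ Prod.snd ⁻¹' Uᶜ))ᶜ := by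
    ext x
    simp [subset_def]
  rw [hcompl]
  exact (isClosedMap_fst_of_compactSpace _
    (hN.inter (hU.isClosed_compl.preimage continuous_snd))).isOpen_compl

theorem IsClosed.upperSemicontinuous_measure_preimage_prodMk [CompactSpace Y] [MeasurableSpace Y]
    (μ : Measure Y) [μ.OuterRegular] (hN : IsClosed N) :
    UpperSemicontinuous fun x => μ (Prod.mk x ⁻¹' N) := by
  intro x c hc
  obtain ⟨U, hNU, hU, hμU⟩ := (Prod.mk x ⁻¹' N).exists_isOpen_lt_of_lt c hc
  filter_upwards [(isOpen_setOf_preimage_prodMk_subset hN hU).mem_nhds hNU] with z hz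
  exact (measure_mono hz).trans_lt hμU

theorem preimage_prodMk_apply_eq_image {T : X ≃ₜ X} {S : Y ≃ₜ Y}
    (hN : (T.prodCongr S) '' N = N) (x : X) :
    Prod.mk (T x) ⁻¹' N = S '' (Prod.mk x ⁻¹' N) := by
  ext y
  conv_lhs => rw [← hN, Homeomorph.image_eq_preimage_symm]
  simp [S.image_eq_preimage_symm]

theorem measure_preimage_prodMk_apply_eq [MeasurableSpace Y] [BorelSpace Y]
    {T : X ≃ₜ X} {S : Y ≃ₜ Y} {μ : Measure Y}
    (hS : ∀ A : Set Y, MeasurableSet A → μ (S ⁻¹' A) = μ A)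
    (hN : (T.prodCongr S) '' N = N) (hmeas : ∀ x, MeasurableSet (Prod.mk x ⁻¹' N)) (x : X) :
    μ (Prod.mk (T x) ⁻¹' N) = μ (Prod.mk x ⁻¹' N) := by
  rw [preimage_prodMk_apply_eq_image hN,
    ← hS _ (S.measurableEmbedding.measurableSet_image' (hmeas x)), S.preimage_image]

end Sections

theorem stmt14_general {X Y : Type*} [MetricSpace X]
    [MetricSpace Y] [CompactSpace Y] [MeasurableSpace Y] [BorelSpace Y]
    (T : X ≃ₜ X) (S : Y ≃ₜ Y)
    (hX : IsMinimalSystem T)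
    (lam : MeasureTheory.Measure Y) [MeasureTheory.IsProbabilityMeasure lam]
    (hinv : ∀ A : Set Y, MeasurableSet A → lam (S ⁻¹' A) = lam A)
    (N : Set (X × Y)) (hNclosed : IsClosed N) (hNinv : (T.prodCongr S) '' N = N) :
    ∀ x x' : X, lam {y : Y | (x, y) ∈ N} = lam {y : Y | (x', y) ∈ N} := by
  have hsec : ∀ x, IsClosed (Prod.mk x ⁻¹' N) := fun x =>
    hNclosed.preimage (Continuous.prodMk_right x)
  exact hX.apply_eq_of_upperSemicontinuous
    (hNclosed.upperSemicontinuous_measure_preimage_prodMk lam)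
    (measure_preimage_prodMk_apply_eq hinv hNinv fun x => (hsec x).measurableSet)

/-- for a closed invariant N ⊆ X × Y and an S-invariant Borel
probability measure λ on Y, the measures of the sections N[x] agree. -/
theorem stmt14 {X Y : Type*} [MetricSpace X] [CompactSpace X]
    [MetricSpace Y] [CompactSpace Y] [MeasurableSpace Y] [BorelSpace Y]
    (T : X ≃ₜ X) (S : Y ≃ₜ Y)
    (hX : IsMinimalSystem T) (hY : IsMinimalSystem S)
    (lam : MeasureTheory.Measure Y) [MeasureTheory.IsProbabilityMeasure lam]
    (hinv : ∀ A : Set Y, MeasurableSet A → lam (S ⁻¹' A) = lam A)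
    (N : Set (X × Y)) (hNclosed : IsClosed N) (hNinv : (T.prodCongr S) '' N = N) :
    ∀ x x' : X, lam {y : Y | (x, y) ∈ N} = lam {y : Y | (x', y) ∈ N} :=
  stmt14_general T S hX lam hinv N hNclosed hNinv
end

section
/- Let (X,T) and (Y,S) be minimal systems, λ an S-invariant Borel probability measure on Y, N a closed T×S-invariant subset of X×Y, and define D_N(x,x') = λ(N[x] Δ N[x']) where N[x] = {y : (x,y) ∈ N}. Then D_N is continuous on X×X and T×T-invariant, i.e. D_N(Tx, Tx') = D_N(x,x'). -/
open Filter Topology Set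

/-!
Write `N[x] = Prod.mk x ⁻¹' N`. Invariance of `N` gives `N[T x] = S '' N[x]`, so `D_N` is
`T × T`-invariant because `λ` is `S`-invariant. As `Y` is compact, `x ↦ N[x]` is upper
hemicontinuous, hence by outer regularity `x ↦ λ(N[x])` is upper semicontinuous; being
`T`-invariant, it is constant by minimality. Equal measures give
`λ(N[x'] Δ N[x]) = 2 λ(N[x'] \ N[x])`, which is small for `x'` near `x` since then `N[x']` lies
in an open set only slightly larger than `N[x]`. Continuity of `D_N` follows from the triangle
inequality for the pseudometric `λ(· Δ ·)`.
-/

open MeasureTheory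
open scoped symmDiff ENNReal

theorem Homeomorph.preimage_prodMk_prodCongr_image {X X' Y Y' : Type*} [TopologicalSpace X]
    [TopologicalSpace X'] [TopologicalSpace Y] [TopologicalSpace Y'] (T : X ≃ₜ X')
    (S : Y ≃ₜ Y') (N : Set (X × Y)) (x : X) :
    Prod.mk (T x) ⁻¹' (T.prodCongr S '' N) = S '' (Prod.mk x ⁻¹' N) := by
  rw [S.image_eq_preimage_symm, Homeomorph.image_eq_preimage_symm]
  ext y
  simp

theorem upperHemicontinuous_preimage_prodMk {X Y : Type*} [TopologicalSpace X]
    [TopologicalSpace Y] [CompactSpace Y] {N : Set (X × Y)} (hN : IsClosed N) :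
    UpperHemicontinuous fun x => Prod.mk x ⁻¹' N := by
  refine .of_forall_isOpen fun x U hU hxU => ?_
  have hK : IsClosed (Prod.fst '' (N ∩ Prod.snd ⁻¹' Uᶜ)) :=
    isClosedMap_fst_of_compactSpace _ (hN.inter (hU.isClosed_compl.preimage continuous_snd))
  have hx : x ∉ Prod.fst '' (N ∩ Prod.snd ⁻¹' Uᶜ) := by
    rintro ⟨⟨_, y⟩, ⟨hy, hyU⟩, rfl⟩
    exact hyU (hxU hy)
  filter_upwards [hK.isOpen_compl.mem_nhds hx] with x' hx' y hy
  by_contra hyU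
  exact hx' ⟨(x', y), ⟨hy, hyU⟩, rfl⟩

theorem apply_zIter_eq {X β : Type*} [TopologicalSpace X] {T : X ≃ₜ X} {g : X → β}
    (hg : ∀ x, g (T x) = g x) (n : ℤ) (x : X) : g (zIter T n x) = g x := by
  induction n using Int.induction_on generalizing x with
  | zero => rfl
  | succ n ih => rw [zIter, zpow_add_one, Equiv.Perm.mul_apply]; exact (ih _).trans (hg x)
  | pred n ih =>
    rw [zIter, zpow_sub_one, Equiv.Perm.mul_apply]
    exact (ih _).trans (by simpa using (hg (T.symm x)).symm)

theorem IsMinimalSystem.eq_of_upperSemicontinuous {X β : Type*} [TopologicalSpace X]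
    [LinearOrder β] {T : X ≃ₜ X} (hT : IsMinimalSystem T) {g : X → β}
    (hg : UpperSemicontinuous g) (hgT : ∀ x, g (T x) = g x) (x x' : X) : g x = g x' := by
  suffices h : ∀ x x', g x ≤ g x' from (h x x').antisymm (h x' x)
  intro x x'
  by_contra! hlt
  obtain ⟨U, hUg, hU, hx'U⟩ := mem_nhds_iff.mp (hg x' (g x) hlt)
  obtain ⟨_, ⟨n, rfl⟩, hn⟩ := (hT x).exists_mem_open hU ⟨x', hx'U⟩
  exact (hUg hn).ne (apply_zIter_eq hgT n x)

theorem Homeomorph.measure_image_eq {Y : Type*} [TopologicalSpace Y] [MeasurableSpace Y]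
    [BorelSpace Y] {μ : Measure Y} (S : Y ≃ₜ Y)
    (hS : ∀ A, MeasurableSet A → μ (S ⁻¹' A) = μ A)
    {A : Set Y} (hA : MeasurableSet A) : μ (S '' A) = μ A := by
  rw [S.image_eq_preimage_symm, ← hS _ (hA.preimage S.symm.measurable), ← preimage_comp,
    S.symm_comp_self, preimage_id]

theorem UpperHemicontinuous.upperSemicontinuous_measure {X Y : Type*} [TopologicalSpace X]
    [TopologicalSpace Y] [MeasurableSpace Y] {F : X → Set Y} (hF : UpperHemicontinuous F)
    (μ : Measure Y) [μ.OuterRegular] : UpperSemicontinuous fun x => μ (F x) := by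
  intro x r hr
  obtain ⟨U, hFU, hU, hUr⟩ := (F x).exists_isOpen_lt_of_lt r hr
  filter_upwards [hF.forall_isOpen x U hU hFU] with x' hx' using (measure_mono hx').trans_lt hUr

theorem measure_symmDiff_eq_two_mul_sdiff {Y : Type*} [MeasurableSpace Y] {μ : Measure Y}
    {s t : Set Y} (hs : MeasurableSet s) (ht : MeasurableSet t) (hst : μ s = μ t)
    (hfin : μ (s ∩ t) ≠ ∞) : μ (s ∆ t) = 2 * μ (s \ t) := by
  have h : μ (t \ s) = μ (s \ t) := by
    refine (ENNReal.add_left_inj hfin).mp ?_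
    rw [measure_sdiff_add_inter s ht, inter_comm, measure_sdiff_add_inter t hs, hst]
  rw [measure_symmDiff_eq hs.nullMeasurableSet ht.nullMeasurableSet, h, two_mul]

theorem UpperHemicontinuous.tendsto_measure_symmDiff {X Y : Type*} [TopologicalSpace X]
    [TopologicalSpace Y] [MeasurableSpace Y] {F : X → Set Y} (hF : UpperHemicontinuous F)
    (hmeas : ∀ x, MeasurableSet (F x)) (μ : Measure Y) [IsFiniteMeasure μ] [μ.OuterRegular]
    (hconst : ∀ x x', μ (F x) = μ (F x')) (x : X) :
    Tendsto (fun x' => μ (F x' ∆ F x)) (𝓝 x) (𝓝 0) := by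
  have hsdiff : Tendsto (fun x' => μ (F x' \ F x)) (𝓝 x) (𝓝 0) := by
    refine ENNReal.tendsto_nhds_zero.mpr fun ε hε => ?_
    obtain ⟨U, hFU, hU, -, hUε⟩ :=
      (hmeas x).exists_isOpen_sdiff_lt (measure_ne_top μ _) hε.ne'
    filter_upwards [hF.forall_isOpen x U hU hFU] with x' hx'
    exact (measure_mono (sdiff_subset_sdiff_left hx')).trans hUε.le
  have h2 : Tendsto (fun x' => 2 * μ (F x' \ F x)) (𝓝 x) (𝓝 0) := by
    simpa using ENNReal.Tendsto.const_mul hsdiff (Or.inr ENNReal.ofNat_ne_top)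
  refine h2.congr fun x' => ?_
  exact (measure_symmDiff_eq_two_mul_sdiff (hmeas x') (hmeas x) (hconst x' x)
    (measure_ne_top μ _)).symm

theorem abs_measureReal_symmDiff_sub_le {Y : Type*} [MeasurableSpace Y] (μ : Measure Y)
    [IsFiniteMeasure μ] (s t s' t' : Set Y) :
    |μ.real (s ∆ t) - μ.real (s' ∆ t')| ≤ μ.real (s ∆ s') + μ.real (t ∆ t') := by
  have h₁ := measureReal_symmDiff_le (μ := μ) (s := s) (t := s') t
  have h₂ := measureReal_symmDiff_le (μ := μ) (s := s') (t := t') t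
  have h₃ := measureReal_symmDiff_le (μ := μ) (s := s') (t := s) t'
  have h₄ := measureReal_symmDiff_le (μ := μ) (s := s) (t := t) t'
  rw [symmDiff_comm t' t] at h₂
  rw [symmDiff_comm s' s] at h₃
  rw [abs_sub_le_iff]
  constructor <;> linarith

theorem continuous_measureReal_symmDiff {X Y : Type*} [TopologicalSpace X] [MeasurableSpace Y]
    {μ : Measure Y} [IsFiniteMeasure μ] {F : X → Set Y}
    (hF : ∀ x, Tendsto (fun x' => μ (F x' ∆ F x)) (𝓝 x) (𝓝 0)) :
    Continuous fun p : X × X => μ.real (F p.1 ∆ F p.2) := by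
  have hF' (x : X) : Tendsto (fun x' => μ.real (F x' ∆ F x)) (𝓝 x) (𝓝 0) := by
    rw [← ENNReal.toReal_zero]
    exact (ENNReal.tendsto_toReal ENNReal.zero_ne_top).comp (hF x)
  refine continuous_iff_continuousAt.mpr fun p => tendsto_iff_dist_tendsto_zero.mpr ?_
  have hbound : Tendsto (fun q : X × X => μ.real (F q.1 ∆ F p.1) + μ.real (F q.2 ∆ F p.2))
      (𝓝 p) (𝓝 0) := by
    simpa using ((hF' p.1).comp continuous_fst.continuousAt).add
      ((hF' p.2).comp continuous_snd.continuousAt)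
  exact squeeze_zero (fun _ => dist_nonneg)
    (fun q => abs_measureReal_symmDiff_sub_le μ _ _ _ _) hbound

theorem stmt15_general {X Y : Type*} [MetricSpace X]
    [MetricSpace Y] [CompactSpace Y] [MeasurableSpace Y] [BorelSpace Y]
    (T : X ≃ₜ X) (S : Y ≃ₜ Y)
    (hX : IsMinimalSystem T)
    (lam : MeasureTheory.Measure Y) [MeasureTheory.IsProbabilityMeasure lam]
    (hinv : ∀ A : Set Y, MeasurableSet A → lam (S ⁻¹' A) = lam A)
    (N : Set (X × Y)) (hNclosed : IsClosed N) (hNinv : (T.prodCongr S) '' N = N) :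
    Continuous (fun p : X × X =>
      (lam (symmDiff {y : Y | (p.1, y) ∈ N} {y : Y | (p.2, y) ∈ N})).toReal) ∧
    ∀ x x' : X,
      lam (symmDiff {y : Y | (T x, y) ∈ N} {y : Y | (T x', y) ∈ N}) =
        lam (symmDiff {y : Y | (x, y) ∈ N} {y : Y | (x', y) ∈ N}) := by
  set F : X → Set Y := fun x => Prod.mk x ⁻¹' N
  have hmeas (x : X) : MeasurableSet (F x) :=
    (hNclosed.preimage (Continuous.prodMk_right x)).measurableSet
  have hsec (x : X) : F (T x) = S '' F x := by
    simp only [F]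
    rw [← T.preimage_prodMk_prodCongr_image S, hNinv]
  have hF : UpperHemicontinuous F := upperHemicontinuous_preimage_prodMk hNclosed
  have hconst : ∀ x x', lam (F x) = lam (F x') :=
    hX.eq_of_upperSemicontinuous (hF.upperSemicontinuous_measure lam)
      fun x => by rw [hsec, S.measure_image_eq hinv (hmeas x)]
  refine ⟨continuous_measureReal_symmDiff (hF.tendsto_measure_symmDiff hmeas lam hconst),
    fun x x' => ?_⟩
  change lam (F (T x) ∆ F (T x')) = lam (F x ∆ F x')
  rw [hsec, hsec, ← image_symmDiff S.injective,
    S.measure_image_eq hinv ((hmeas x).symmDiff (hmeas x'))]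

/-- D_N(x,x') = λ(N[x] Δ N[x']) is continuous and
T×T-invariant. -/
theorem stmt15 {X Y : Type*} [MetricSpace X] [CompactSpace X]
    [MetricSpace Y] [CompactSpace Y] [MeasurableSpace Y] [BorelSpace Y]
    (T : X ≃ₜ X) (S : Y ≃ₜ Y)
    (hX : IsMinimalSystem T) (hY : IsMinimalSystem S)
    (lam : MeasureTheory.Measure Y) [MeasureTheory.IsProbabilityMeasure lam]
    (hinv : ∀ A : Set Y, MeasurableSet A → lam (S ⁻¹' A) = lam A)
    (N : Set (X × Y)) (hNclosed : IsClosed N) (hNinv : (T.prodCongr S) '' N = N) :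
    Continuous (fun p : X × X =>
      (lam (symmDiff {y : Y | (p.1, y) ∈ N} {y : Y | (p.2, y) ∈ N})).toReal) ∧
    ∀ x x' : X,
      lam (symmDiff {y : Y | (T x, y) ∈ N} {y : Y | (T x', y) ∈ N}) =
        lam (symmDiff {y : Y | (x, y) ∈ N} {y : Y | (x', y) ∈ N}) :=
  stmt15_general T S hX lam hinv N hNclosed hNinv
end

section
/- Let (X,T) = lim← (Xₙ, T) be an inverse limit of minimal systems and (Y,S) a minimal system. If Xₙ is quasi-disjoint from Y for every n, then X is quasi-disjoint from Y. -/
/-!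
A joining `J` of `X` and `Y` projecting onto `X_eq × Y_eq` pushes forward along `φₙ × id` to a
joining of `Xₙ` and `Y` with the same property, because factor maps preserve regional
proximality. Quasi-disjointness makes each pushforward all of `Xₙ × Y`. Hence for each `(x, y)`
and each `n` some `(a, y) ∈ J` has `φₙ a = φₙ x`; these fibres decrease with `n`, so by
compactness they have a common point, which must be `x` because the `φₙ` separate points.
-/

open Filter Topology Set

lemma zIter_semiconj {X Z : Type*} [TopologicalSpace X] [TopologicalSpace Z]
    {T : X ≃ₜ X} {R : Z ≃ₜ Z} {f : X → Z} (hf : Function.Semiconj f T R) (n : ℤ) :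
    Function.Semiconj f (zIter T n) (zIter R n) := by
  change Function.Semiconj f ⇑(T.toEquiv ^ n) ⇑(R.toEquiv ^ n)
  have hf' : Function.Semiconj f T.toEquiv R.toEquiv := hf
  cases n with
  | ofNat k => simpa [Equiv.Perm.coe_pow] using hf'.iterate_right k
  | negSucc k =>
    rw [zpow_negSucc, zpow_negSucc]
    exact (hf'.iterate_right (k + 1)).inverses_right
      (by simpa [Equiv.Perm.coe_pow] using (T.toEquiv ^ (k + 1)).right_inv)
      (by simpa [Equiv.Perm.coe_pow] using (R.toEquiv ^ (k + 1)).left_inv)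

lemma map_mem_RP {X Z : Type*} [MetricSpace X] [CompactSpace X] [MetricSpace Z]
    {T : X ≃ₜ X} {R : Z ≃ₜ Z} {f : X → Z} (hfc : Continuous f) (hf : Function.Semiconj f T R)
    {a b : X} (h : (a, b) ∈ RP T) : (f a, f b) ∈ RP R := by
  obtain ⟨u, v, n, hu, hv, hd⟩ := h
  refine ⟨f ∘ u, f ∘ v, n, (hfc.tendsto a).comp hu, (hfc.tendsto b).comp hv, ?_⟩
  have hfd := tendsto_uniformity_iff_dist_tendsto_zero.1 <|
    Tendsto.comp (CompactSpace.uniformContinuous_of_continuous hfc)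
      ((tendsto_uniformity_iff_dist_tendsto_zero
        (f := fun i => (zIter T (n i) (u i), zIter T (n i) (v i)))).2 hd)
  refine hfd.congr fun i => ?_
  simp only [Function.comp_apply, zIter_semiconj hf (n i) _]

lemma IsJoining.image_prodMap {X X' Y : Type*} [TopologicalSpace X] [CompactSpace X]
    [TopologicalSpace X'] [T2Space X'] [TopologicalSpace Y] {T : X ≃ₜ X} {T' : X' ≃ₜ X'}
    {S : Y ≃ₜ Y} {f : X → X'} {J : Set (X × Y)} (hf : IsFactorMap T T' f) (hJ : IsJoining T S J) :
    IsJoining T' S (Prod.map f id '' J) := by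
  obtain ⟨hfc, hfs, hfT⟩ := hf
  obtain ⟨hJc, hJinv, hJfst, hJsnd⟩ := hJ
  have hcomm : T'.prodCongr S ∘ Prod.map f id = Prod.map f id ∘ T.prodCongr S := by
    funext q
    exact Prod.ext (hfT q.1).symm rfl
  refine ⟨hfc.isProperMap.universally_closed Y _ hJc, ?_, ?_, ?_⟩
  · rw [← image_comp, hcomm, image_comp, hJinv]
  · rw [← image_comp, Prod.map_fst', image_comp, hJfst, image_univ, hfs.range_eq]
  · rwa [← image_comp, Prod.map_snd', image_comp, image_id]

lemma FullEqProjection.image_prodMap {X X' Y : Type*} [MetricSpace X] [CompactSpace X]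
    [MetricSpace X'] [MetricSpace Y] {T : X ≃ₜ X} {T' : X' ≃ₜ X'} {S : Y ≃ₜ Y} {f : X → X'}
    {J : Set (X × Y)} (hf : IsFactorMap T T' f) (hJ : FullEqProjection T S J) :
    FullEqProjection T' S (Prod.map f id '' J) := by
  intro x' y
  obtain ⟨x, rfl⟩ := hf.2.1 x'
  obtain ⟨q, hq, hx, hy⟩ := hJ x y
  exact ⟨Prod.map f id q, mem_image_of_mem _ hq, map_mem_RP hf.1 hf.2.2 hx, hy⟩

lemma IsClosed.mem_of_forall_mem_image {X : Type*} {Xs : ℕ → Type*} [TopologicalSpace X]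
    [CompactSpace X] [∀ n, TopologicalSpace (Xs n)] [∀ n, T1Space (Xs n)]
    {φ : ∀ n, X → Xs n} (hφ : ∀ n, Continuous (φ n))
    (hmono : ∀ n u v, φ (n + 1) u = φ (n + 1) v → φ n u = φ n v)
    (hsep : ∀ u v, (∀ n, φ n u = φ n v) → u = v) {K : Set X} (hK : IsClosed K) {x : X}
    (hx : ∀ n, φ n x ∈ φ n '' K) : x ∈ K := by
  have hclosed : ∀ n, IsClosed (K ∩ φ n ⁻¹' {φ n x}) := fun n =>
    hK.inter (isClosed_singleton.preimage (hφ n))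
  obtain ⟨w, hw⟩ := (hclosed 0).isCompact.nonempty_iInter_of_sequence_nonempty_isCompact_isClosed
    (fun n => K ∩ φ n ⁻¹' {φ n x}) (fun n a ha => ⟨ha.1, hmono n a x ha.2⟩) hx hclosed
  rw [mem_iInter] at hw
  obtain rfl : w = x := hsep w x fun n => (hw n).2
  exact (hw 0).1

theorem stmt19_general {Y : Type*} [MetricSpace Y]
    (Xs : ℕ → Type*) [∀ n, MetricSpace (Xs n)]
    (Ts : ∀ n, Xs n ≃ₜ Xs n)
    (p : ∀ n, Xs (n + 1) → Xs n)
    {X : Type*} [MetricSpace X] [CompactSpace X] (T : X ≃ₜ X)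
    (φ : ∀ n, X → Xs n) (hφ : ∀ n, IsFactorMap T (Ts n) (φ n))
    (hcompat : ∀ n x, p n (φ (n + 1) x) = φ n x)
    (hsep : ∀ x y : X, (∀ n, φ n x = φ n y) → x = y)
    (S : Y ≃ₜ Y)
    (hQD : ∀ n, QuasiDisjoint (Ts n) S) :
    QuasiDisjoint T S := by
  intro J hJ hJeq
  have hJn : ∀ n, Prod.map (φ n) id '' J = univ := fun n =>
    hQD n _ (hJ.image_prodMap (hφ n)) (hJeq.image_prodMap (hφ n))
  refine eq_univ_of_forall fun ⟨x, y⟩ => ?_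
  have hK : IsClosed {a | (a, y) ∈ J} := hJ.1.preimage (continuous_id.prodMk continuous_const)
  refine hK.mem_of_forall_mem_image (fun n => (hφ n).1)
    (fun n u v h => by rw [← hcompat n u, ← hcompat n v, h]) hsep fun n => ?_
  obtain ⟨⟨a, b⟩, hab, heq⟩ : (φ n x, y) ∈ Prod.map (φ n) id '' J := hJn n ▸ trivial
  obtain ⟨ha, rfl⟩ := Prod.mk.inj heq
  exact ⟨a, hab, ha⟩

/-- quasi-disjointness is preserved under inverse limits. -/
theorem stmt19 {Y : Type*} [MetricSpace Y] [CompactSpace Y]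
    (Xs : ℕ → Type*) [∀ n, MetricSpace (Xs n)] [∀ n, CompactSpace (Xs n)]
    (Ts : ∀ n, Xs n ≃ₜ Xs n) (hmin : ∀ n, IsMinimalSystem (Ts n))
    (p : ∀ n, Xs (n + 1) → Xs n) (hp : ∀ n, IsFactorMap (Ts (n + 1)) (Ts n) (p n))
    {X : Type*} [MetricSpace X] [CompactSpace X] (T : X ≃ₜ X)
    (φ : ∀ n, X → Xs n) (hφ : ∀ n, IsFactorMap T (Ts n) (φ n))
    (hcompat : ∀ n x, p n (φ (n + 1) x) = φ n x)
    (hsep : ∀ x y : X, (∀ n, φ n x = φ n y) → x = y)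
    (hlim : ∀ s : (∀ n, Xs n), (∀ n, p n (s (n + 1)) = s n) → ∃ x : X, ∀ n, φ n x = s n)
    (S : Y ≃ₜ Y) (hY : IsMinimalSystem S)
    (hQD : ∀ n, QuasiDisjoint (Ts n) S) :
    QuasiDisjoint T S :=
  stmt19_general Xs Ts p T φ hφ hcompat hsep S hQD
end
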